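/- Suppose the weight graph decomposes into K connected components C_1,…,C_K (i.e., w_{ij} = 0 whenever i and j lie in different components). Then the convex clustering loss splits as L(A) = Σ_{k=1}^K [κ_ε Σ_{i∈C_k}‖x_i − a_i‖² + λ·κ_pen·Σ_{i<j, i,j∈C_k} w_{ij}‖a_i − a_j‖], and for sufficiently large finite λ the global minimizer satisfies a_i = x̄_k for all i ∈ C_k, where x̄_k is the mean of {x_i : i ∈ C_k}. -/

import Mathlib

/-- The graph associated with a nonnegative weight matrix: an edge between `i ≠ j`
whenever the weight between them is positive (symmetrized). -/
def weightGraph (n : ℕ) (w : Fin n → Fin n → ℝ) : SimpleGraph (Fin n) where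
  Adj i j := i ≠ j ∧ (0 < w i j ∨ 0 < w j i)
  symm := ⟨by intro i j ⟨hne, hw⟩; exact ⟨hne.symm, hw.symm⟩⟩
  loopless := ⟨by intro i ⟨hne, _⟩; exact hne rfl⟩

/-!
Write `B` for the componentwise means and `g i = X i - B i`. Since
`‖X i - A i‖² ≥ ‖g i‖² - 2 ⟪g i, A i - B i⟫`, moving from `B` to `A` lowers the data term by at
most `2 ∑ ⟪g i, A i - B i⟫`. The residuals `g` sum to zero over each component, on which `B` is
constant, so this cross term only sees differences `A i - A j` inside a component. Along a path of
the weight graph these are bounded by the total variation `T = ∑_darts ‖A u - A v‖`, so the data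
term drops by at most `2 (∑ ‖g i‖) T`. The penalty vanishes at `B` and is at least
`T / (2 ∑_darts 1 / w)` at `A` (the sum of the `1 / w` stands in for `1 / min w`), so no `A` beats
`B` once `λ κpen ≥ 4 κε (∑ ‖g i‖) (∑_darts 1 / w)`.
-/

open Finset SimpleGraph

section Graph

variable {V E : Type*} {G : SimpleGraph V} [SeminormedAddCommGroup E]

theorem SimpleGraph.Walk.norm_sub_le_sum_darts (a : V → E) {u v : V} (q : G.Walk u v) :
    ‖a u - a v‖ ≤ (q.darts.map fun d => ‖a d.fst - a d.snd‖).sum := by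
  induction q with
  | nil => simp
  | cons _ q ih =>
    simp only [Walk.darts_cons, List.map_cons, List.sum_cons]
    exact (norm_sub_le_norm_sub_add_norm_sub _ _ _).trans (add_le_add_right ih _)

variable [Fintype V] [DecidableRel G.Adj]

theorem SimpleGraph.Reachable.norm_sub_le_sum_darts {u v : V} (h : G.Reachable u v)
    (a : V → E) : ‖a u - a v‖ ≤ ∑ d : G.Dart, ‖a d.fst - a d.snd‖ := by
  classical
  obtain ⟨q, hq⟩ := h.exists_isPath
  calc ‖a u - a v‖ ≤ (q.darts.map fun d => ‖a d.fst - a d.snd‖).sum := q.norm_sub_le_sum_darts a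
    _ = ∑ d ∈ q.darts.toFinset, ‖a d.fst - a d.snd‖ :=
      (List.sum_toFinset _ (Walk.darts_nodup_of_support_nodup hq.support_nodup)).symm
    _ ≤ ∑ d : G.Dart, ‖a d.fst - a d.snd‖ := sum_le_univ_sum_of_nonneg fun _ => norm_nonneg _

theorem SimpleGraph.sum_darts_le_sum_sum {f : V → V → ℝ} (hf : ∀ u v, 0 ≤ f u v) :
    ∑ d : G.Dart, f d.fst d.snd ≤ ∑ u, ∑ v, f u v := by
  calc ∑ d : G.Dart, f d.fst d.snd
      = ∑ x ∈ univ.map ⟨Dart.toProd, Dart.toProd_injective⟩, f x.1 x.2 := by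
        rw [sum_map]; rfl
    _ ≤ ∑ x : V × V, f x.1 x.2 := sum_le_univ_sum_of_nonneg fun x => hf x.1 x.2
    _ = ∑ u, ∑ v, f u v := Fintype.sum_prod_type _

end Graph

theorem Finset.sum_le_sum_inv_mul_sum_mul {ι : Type*} (s : Finset ι) {f g : ι → ℝ}
    (hf : ∀ i ∈ s, 0 ≤ f i) (hg : ∀ i ∈ s, 0 < g i) :
    ∑ i ∈ s, f i ≤ (∑ i ∈ s, (g i)⁻¹) * ∑ i ∈ s, g i * f i := by
  rw [mul_sum]
  refine sum_le_sum fun i hi => ?_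
  calc f i = (g i)⁻¹ * (g i * f i) := by field_simp [(hg i hi).ne']
    _ ≤ _ := mul_le_mul_of_nonneg_right
      (single_le_sum (fun j hj => (inv_pos.2 (hg j hj)).le) hi) (mul_nonneg (hg i hi).le (hf i hi))

theorem Finset.sum_sum_eq_two_mul_sum_sum_lt {ι R : Type*} [Fintype ι] [LinearOrder ι]
    [NonAssocSemiring R] {f : ι → ι → R} (hsymm : ∀ i j, f i j = f j i) (hdiag : ∀ i, f i i = 0) :
    ∑ i, ∑ j, f i j = 2 * ∑ i, ∑ j, if i < j then f i j else 0 := by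
  have hsplit : ∀ i j, f i j = (if i < j then f i j else 0) + if j < i then f j i else 0 := by
    intro i j
    rcases lt_trichotomy i j with h | rfl | h
    · simp [h, h.not_gt]
    · simp [hdiag]
    · simp [h, h.not_gt, hsymm i j]
  calc ∑ i, ∑ j, f i j
      = ∑ i, ∑ j, ((if i < j then f i j else 0) + if j < i then f j i else 0) := by
        simp_rw [← hsplit]
    _ = ∑ i, ∑ j, (if i < j then f i j else 0) + ∑ i, ∑ j, if j < i then f j i else 0 := by
        simp only [sum_add_distrib]
    _ = _ := by rw [sum_comm (f := fun i j => if j < i then f j i else 0), two_mul]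

theorem Finset.sum_sum_sum_ite_same_fiber {ι κ M : Type*} [Fintype ι] [Fintype κ] [DecidableEq κ]
    [AddCommMonoid M] (c : ι → κ) (P : ι → ι → Prop) [DecidableRel P] {f : ι → ι → M}
    (hf : ∀ i j, c i ≠ c j → f i j = 0) :
    ∑ k, ∑ i, ∑ j, (if P i j ∧ c i = k ∧ c j = k then f i j else 0) =
      ∑ i, ∑ j, if P i j then f i j else 0 := by
  rw [sum_comm]
  refine sum_congr rfl fun i _ => ?_
  rw [sum_comm]
  refine sum_congr rfl fun j _ => ?_
  by_cases hc : c i = c j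
  · by_cases hP : P i j <;> simp [hc, hP]
  · simp [hf i j hc]

section Mean

variable {ι κ E : Type*} [AddCommGroup E] [Module ℝ E]

theorem Finset.sum_sub_card_inv_smul_sum (s : Finset ι) (X : ι → E) :
    ∑ i ∈ s, (X i - (#s : ℝ)⁻¹ • ∑ j ∈ s, X j) = 0 := by
  rcases s.eq_empty_or_nonempty with rfl | hs
  · simp
  · rw [sum_sub_distrib, sum_const, ← Nat.cast_smul_eq_nsmul ℝ, smul_smul,
      mul_inv_cancel₀ (by exact_mod_cast hs.card_pos.ne'), one_smul, sub_self]

variable [Fintype ι] [DecidableEq κ]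

noncomputable def componentMean (c : ι → κ) (X : ι → E) (i : ι) : E :=
  ((Finset.univ.filter fun i' => c i' = c i).card : ℝ)⁻¹ •
    ∑ i' ∈ Finset.univ.filter fun i' => c i' = c i, X i'

theorem componentMean_eq_of_eq {c : ι → κ} (X : ι → E) {i j : ι} (h : c i = c j) :
    componentMean c X i = componentMean c X j := by
  simp only [componentMean, h]

end Mean

section InnerProduct

variable {ι κ E : Type*} [NormedAddCommGroup E] [InnerProductSpace ℝ E]

theorem norm_sq_le_norm_sub_sq_add_two_inner (x y : E) :
    ‖x‖ ^ 2 ≤ ‖x - y‖ ^ 2 + 2 * inner ℝ x y := by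
  nlinarith [norm_sub_sq_real x y, sq_nonneg ‖y‖]

theorem Finset.sum_inner_le_of_sum_eq_zero (s : Finset ι) {g a : ι → E}
    (hg : ∑ i ∈ s, g i = 0) {T : ℝ} (ha : ∀ i ∈ s, ∀ j ∈ s, ‖a i - a j‖ ≤ T) :
    ∑ i ∈ s, inner ℝ (g i) (a i) ≤ (∑ i ∈ s, ‖g i‖) * T := by
  rcases s.eq_empty_or_nonempty with rfl | ⟨j, hj⟩
  · simp
  have hshift : ∑ i ∈ s, inner ℝ (g i) (a i) = ∑ i ∈ s, inner ℝ (g i) (a i - a j) := by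
    simp_rw [inner_sub_right, sum_sub_distrib, ← sum_inner, hg, inner_zero_left, sub_zero]
  rw [hshift, sum_mul]
  exact sum_le_sum fun i hi => (real_inner_le_norm _ _).trans
    (mul_le_mul_of_nonneg_left (ha i hi j hj) (norm_nonneg _))

theorem sum_norm_sub_componentMean_sq_le [Fintype ι] [Fintype κ] [DecidableEq κ] {G : SimpleGraph ι}
    [DecidableRel G.Adj] {c : ι → κ} (hconn : ∀ i j, c i = c j → G.Reachable i j)
    (X A : ι → E) :
    ∑ i, ‖X i - componentMean c X i‖ ^ 2 ≤ ∑ i, ‖X i - A i‖ ^ 2 +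
      2 * (∑ i, ‖X i - componentMean c X i‖) * ∑ d : G.Dart, ‖A d.fst - A d.snd‖ := by
  set B := componentMean c X
  have hcross : ∑ i, inner ℝ (X i - B i) (A i - B i) ≤
      (∑ i, ‖X i - B i‖) * ∑ d : G.Dart, ‖A d.fst - A d.snd‖ := by
    rw [← sum_fiberwise univ c, ← sum_fiberwise univ c fun i => ‖X i - B i‖, sum_mul]
    refine sum_le_sum fun k _ => sum_inner_le_of_sum_eq_zero _ ?_ fun i hi j hj => ?_
    · refine (sum_congr rfl fun i hi => ?_).trans (sum_sub_card_inv_smul_sum _ X)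
      simp only [B, componentMean, (mem_filter.1 hi).2]
    · rw [mem_filter] at hi hj
      have hB : B i = B j := componentMean_eq_of_eq X (hi.2.trans hj.2.symm)
      rw [hB, sub_sub_sub_cancel_right]
      exact (hconn i j (hi.2.trans hj.2.symm)).norm_sub_le_sum_darts A
  calc ∑ i, ‖X i - B i‖ ^ 2
      ≤ ∑ i, (‖X i - A i‖ ^ 2 + 2 * inner ℝ (X i - B i) (A i - B i)) := sum_le_sum fun i _ => by
        simpa using norm_sq_le_norm_sub_sq_add_two_inner (X i - B i) (A i - B i)
    _ = ∑ i, ‖X i - A i‖ ^ 2 + 2 * ∑ i, inner ℝ (X i - B i) (A i - B i) := by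
        rw [sum_add_distrib, mul_sum]
    _ ≤ _ := by linarith

end InnerProduct

section FusionPenalty

variable {ι E : Type*} [Fintype ι] [LinearOrder ι]

noncomputable def fusionPenalty [SeminormedAddCommGroup E] (w : ι → ι → ℝ) (A : ι → E) : ℝ :=
  ∑ i, ∑ j, if i < j then w i j * ‖A i - A j‖ else 0

theorem fusionPenalty_nonneg [SeminormedAddCommGroup E] {w : ι → ι → ℝ} (hw : ∀ i j, 0 ≤ w i j)
    (A : ι → E) : 0 ≤ fusionPenalty w A :=
  sum_nonneg fun i _ => sum_nonneg fun j _ => by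
    split_ifs
    exacts [mul_nonneg (hw i j) (norm_nonneg _), le_rfl]

theorem fusionPenalty_componentMean {κ : Type*} [DecidableEq κ] [SeminormedAddCommGroup E]
    [Module ℝ E] {w : ι → ι → ℝ} {c : ι → κ} (hcross : ∀ i j, c i ≠ c j → w i j = 0)
    (X : ι → E) : fusionPenalty w (componentMean c X) = 0 := by
  refine sum_eq_zero fun i _ => sum_eq_zero fun j _ => ?_
  by_cases hc : c i = c j
  · simp [componentMean_eq_of_eq X hc]
  · simp [hcross i j hc]

end FusionPenalty

section WeightGraph

variable {n : ℕ} {w : Fin n → Fin n → ℝ}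

theorem weightGraph_adj_weight_pos (hsymm : ∀ i j, w i j = w j i) {i j : Fin n}
    (h : (weightGraph n w).Adj i j) : 0 < w i j :=
  h.2.elim id fun h' => hsymm i j ▸ h'

theorem sum_inv_weight_darts_nonneg [DecidableRel (weightGraph n w).Adj]
    (hsymm : ∀ i j, w i j = w j i) : 0 ≤ ∑ d : (weightGraph n w).Dart, (w d.fst d.snd)⁻¹ :=
  sum_nonneg fun d _ => (inv_pos.2 (weightGraph_adj_weight_pos hsymm d.adj)).le

theorem sum_darts_norm_le_fusionPenalty {E : Type*} [SeminormedAddCommGroup E]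
    [DecidableRel (weightGraph n w).Adj] (hw : ∀ i j, 0 ≤ w i j)
    (hsymm : ∀ i j, w i j = w j i) (A : Fin n → E) :
    ∑ d : (weightGraph n w).Dart, ‖A d.fst - A d.snd‖ ≤
      2 * (∑ d : (weightGraph n w).Dart, (w d.fst d.snd)⁻¹) * fusionPenalty w A := by
  have hW := sum_inv_weight_darts_nonneg (w := w) hsymm
  calc ∑ d : (weightGraph n w).Dart, ‖A d.fst - A d.snd‖
      ≤ (∑ d : (weightGraph n w).Dart, (w d.fst d.snd)⁻¹) *
          ∑ d : (weightGraph n w).Dart, w d.fst d.snd * ‖A d.fst - A d.snd‖ :=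
        sum_le_sum_inv_mul_sum_mul _ (fun _ _ => norm_nonneg _)
          fun d _ => weightGraph_adj_weight_pos hsymm d.adj
    _ ≤ (∑ d : (weightGraph n w).Dart, (w d.fst d.snd)⁻¹) * ∑ i, ∑ j, w i j * ‖A i - A j‖ :=
        mul_le_mul_of_nonneg_left
          (sum_darts_le_sum_sum fun i j => mul_nonneg (hw i j) (norm_nonneg (A i - A j))) hW
    _ = _ := by
        rw [sum_sum_eq_two_mul_sum_sum_lt (fun i j => by rw [hsymm, norm_sub_rev]) (by simp),
          fusionPenalty]
        ring

end WeightGraph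

theorem loss_splits_and_componentwise_means_minimize_general
    (n p K : ℕ) (X : Fin n → EuclideanSpace ℝ (Fin p))
    (κε κpen : ℝ) (hκε : 0 < κε) (hκpen : 0 < κpen)
    (w : Fin n → Fin n → ℝ) (hw : ∀ i j, 0 ≤ w i j) (hsymm : ∀ i j, w i j = w j i)
    (c : Fin n → Fin K)
    (hcross : ∀ i j, c i ≠ c j → w i j = 0)
    (hconn : ∀ i j, c i = c j → (weightGraph n w).Reachable i j)
    (L : ℝ → (Fin n → EuclideanSpace ℝ (Fin p)) → ℝ)
    (hL : ∀ lam A, L lam A = κε * (∑ i, ‖X i - A i‖ ^ 2) +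
      lam * κpen * ∑ i, ∑ j, if i < j then w i j * ‖A i - A j‖ else 0) :
    (∀ lam A, L lam A = ∑ k : Fin K,
      (κε * (∑ i, if c i = k then ‖X i - A i‖ ^ 2 else 0) +
        lam * κpen * ∑ i, ∑ j,
          if i < j ∧ c i = k ∧ c j = k then w i j * ‖A i - A j‖ else 0)) ∧
    (∃ lam₀ : ℝ, 0 ≤ lam₀ ∧ ∀ lam ≥ lam₀, ∀ A,
      L lam (fun i =>
        ((Finset.univ.filter fun i' => c i' = c i).card : ℝ)⁻¹ •
          ∑ i' ∈ Finset.univ.filter fun i' => c i' = c i, X i') ≤ L lam A) := by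
  classical
  refine ⟨fun lam A => ?_, ?_⟩
  · rw [hL, sum_add_distrib, ← mul_sum, ← mul_sum,
      sum_sum_sum_ite_same_fiber c _ fun i j hc => by rw [hcross i j hc, zero_mul]]
    simp only [← sum_filter, sum_fiberwise]
  set B := componentMean c X
  set M := ∑ i, ‖X i - B i‖
  set W := ∑ d : (weightGraph n w).Dart, (w d.fst d.snd)⁻¹
  have hM : 0 ≤ M := sum_nonneg fun i _ => norm_nonneg _
  have hW : 0 ≤ W := sum_inv_weight_darts_nonneg hsymm
  refine ⟨4 * κε * M * W / κpen, by positivity, fun lam hlam A => ?_⟩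
  have hL' : ∀ A, L lam A = κε * ∑ i, ‖X i - A i‖ ^ 2 + lam * κpen * fusionPenalty w A := hL lam
  have hfit := sum_norm_sub_componentMean_sq_le hconn X A
  have hT := sum_darts_norm_le_fusionPenalty hw hsymm A
  have hP := fusionPenalty_nonneg hw A
  have hlam' : 4 * κε * M * W ≤ lam * κpen := (div_le_iff₀ hκpen).1 hlam
  show L lam B ≤ L lam A
  rw [hL', hL', fusionPenalty_componentMean hcross, mul_zero, add_zero]
  calc κε * ∑ i, ‖X i - B i‖ ^ 2
      ≤ κε * (∑ i, ‖X i - A i‖ ^ 2 + 2 * M * (2 * W * fusionPenalty w A)) := by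
        gcongr
        exact hfit.trans (by gcongr)
    _ = κε * ∑ i, ‖X i - A i‖ ^ 2 + 4 * κε * M * W * fusionPenalty w A := by ring
    _ ≤ κε * ∑ i, ‖X i - A i‖ ^ 2 + lam * κpen * fusionPenalty w A := by gcongr

theorem loss_splits_and_componentwise_means_minimize
    (n p K : ℕ) (X : Fin n → EuclideanSpace ℝ (Fin p))
    (κε κpen : ℝ) (hκε : 0 < κε) (hκpen : 0 < κpen)
    (w : Fin n → Fin n → ℝ) (hw : ∀ i j, 0 ≤ w i j) (hsymm : ∀ i j, w i j = w j i)
    (c : Fin n → Fin K) (hsurj : Function.Surjective c)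
    (hcross : ∀ i j, c i ≠ c j → w i j = 0)
    (hconn : ∀ i j, c i = c j → (weightGraph n w).Reachable i j)
    (L : ℝ → (Fin n → EuclideanSpace ℝ (Fin p)) → ℝ)
    (hL : ∀ lam A, L lam A = κε * (∑ i, ‖X i - A i‖ ^ 2) +
      lam * κpen * ∑ i, ∑ j, if i < j then w i j * ‖A i - A j‖ else 0) :
    (∀ lam A, L lam A = ∑ k : Fin K,
      (κε * (∑ i, if c i = k then ‖X i - A i‖ ^ 2 else 0) +
        lam * κpen * ∑ i, ∑ j,
          if i < j ∧ c i = k ∧ c j = k then w i j * ‖A i - A j‖ else 0)) ∧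
    (∃ lam₀ : ℝ, 0 ≤ lam₀ ∧ ∀ lam ≥ lam₀, ∀ A,
      L lam (fun i =>
        ((Finset.univ.filter fun i' => c i' = c i).card : ℝ)⁻¹ •
          ∑ i' ∈ Finset.univ.filter fun i' => c i' = c i, X i') ≤ L lam A) :=
  loss_splits_and_componentwise_means_minimize_general n p K X κε κpen hκε hκpen w hw hsymm c hcross
    hconn L hL
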